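/- arXiv:1703.09535 — 3 statements merged into one kernel-verified Lean document; each statement's English description precedes it below -/
import Mathlib

section
/- Let X be a topological space, n ≥ 1 an integer, and P a map assigning to each ζ ∈ X a monic complex polynomial P(ζ) of degree n whose coefficients depend continuously on ζ. Let ξ ∈ X, let w_1,…,w_m be the distinct zeros of P(ξ), and let n_j be the multiplicity of w_j as a zero of P(ξ). Then ξ is NOT a splitting point of the zeros of P if and only if there exist an open neighborhood U of ξ and continuous functions λ_1,…,λ_m : U → ℂ such that λ_j(ξ) = w_j for 1 ≤ j ≤ m, and for each ζ ∈ U the values λ_1(ζ),…,λ_m(ζ) are pairwise distinct, are exactly the zeros of P(ζ), and λ_j(ζ) has multiplicity n_j as a zero of P(ζ). -/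
/-!
Choose `ε > 0` so that the discs `B(w_j, ε)` are pairwise disjoint. Since `P(ζ)` is the product
of the factors `t - r` over its zeros `r`, a small value `|P(ζ)(w_j)|` forces a zero of `P(ζ)`
close to `w_j`; so for `ζ` near `ξ` every disc contains a zero of `P(ζ)`. If `ξ` is not a
splitting point, `P(ζ)` has at most `m` distinct zeros, hence exactly one zero `λ_j(ζ)` in each
disc, and this uniqueness makes `λ_j` continuous. The multiplicity of `λ_j(ζ)` is upper
semicontinuous (a derivative of `P(ξ)` that does not vanish at `w_j` keeps not vanishing at
`λ_j(ζ)`), and for both `ζ` and `ξ` the multiplicities add up to `n`, so they agree near `ξ`.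
-/

/-- `ξ` is a splitting point of the zeros of `P` : every neighborhood of `ξ`
contains a point `ζ` such that `P ζ` has more distinct zeros than `P ξ`. -/
def IsSplitPtPoly {X : Type*} [TopologicalSpace X] (P : X → Polynomial ℂ) (ξ : X) : Prop :=
  ∀ U ∈ nhds ξ, ∃ ζ ∈ U, (P ξ).roots.toFinset.card < (P ζ).roots.toFinset.card

open Polynomial Filter Topology Finset Function Metric

lemma exists_pos_pairwise_disjoint_ball {α ι : Type*} [MetricSpace α] [Finite ι] {w : ι → α}
    (hw : Injective w) : ∃ ε > 0, Pairwise (Disjoint on fun i => ball (w i) ε) := by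
  have h : ∀ᶠ ε in 𝓝 (0 : ℝ), ∀ i j, i ≠ j → ε < dist (w i) (w j) / 2 :=
    eventually_all.2 fun i => eventually_all.2 fun j => by
      by_cases hij : i = j
      · exact .of_forall fun _ h => absurd hij h
      · filter_upwards [eventually_lt_nhds (half_pos (dist_pos.2 (hw.ne hij)))] with ε hε _
        exact hε
  obtain ⟨ε, hε, hε0⟩ := ((h.filter_mono nhdsWithin_le_nhds).and
    (self_mem_nhdsWithin (s := Set.Ioi 0))).exists
  exact ⟨ε, hε0, fun i j hij => ball_disjoint_ball (by linarith [hε i j hij])⟩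

lemma Finset.eq_image_of_card_le_of_pairwise_disjoint {α ι : Type*} [DecidableEq α] [Fintype ι]
    {s : Finset α} {B : ι → Set α} (hB : Pairwise (Disjoint on B)) {φ : ι → α}
    (hφs : ∀ i, φ i ∈ s) (hφB : ∀ i, φ i ∈ B i) (hcard : s.card ≤ Fintype.card ι) :
    s = univ.image φ ∧ Injective φ := by
  have hinj : Injective φ := fun i j h =>
    hB.eq (Set.not_disjoint_iff.2 ⟨φ i, hφB i, h ▸ hφB j⟩)
  refine ⟨(eq_of_subset_of_card_le (image_subset_iff.2 fun i _ => hφs i) ?_).symm, hinj⟩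
  rw [card_image_of_injective _ hinj, card_univ]
  exact hcard

lemma Finset.card_eq_of_mem_iff_exists_eq {α : Type*} {s : Finset α} {m : ℕ} {a : Fin m → α}
    (ha : Injective a) (h : ∀ z, z ∈ s ↔ ∃ j, a j = z) : s.card = m := by
  classical
  rw [show s = univ.image a by ext; simp [h], card_image_of_injective _ ha]
  simp

namespace Polynomial

lemma exists_mem_roots_dist_lt_of_norm_eval_lt {K : Type*} [NormedField K] [IsAlgClosed K]
    {p : K[X]} (hp : p.Monic) {t : K} {ε : ℝ} (hε : 0 ≤ ε)
    (h : ‖p.eval t‖ < ε ^ p.natDegree) : ∃ r ∈ p.roots, dist t r < ε := by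
  by_contra! hfar
  refine h.not_ge ?_
  calc ε ^ p.natDegree = (p.roots.map fun _ => ε).prod := by
        simp [IsAlgClosed.card_roots_eq_natDegree]
    _ ≤ (p.roots.map fun r => ‖t - r‖).prod :=
        Multiset.prod_map_le_prod_map₀ _ _ (fun _ _ => hε) fun r hr => by
          simpa [dist_eq_norm] using hfar r hr
    _ = ‖p.eval t‖ := by
        rw [(IsAlgClosed.splits p).eval_eq_prod_roots_of_monic hp, ← normHom_apply,
          map_multiset_prod, Multiset.map_map]
        rfl

lemma sum_rootMultiplicity_eq_natDegree {K : Type*} [Field K] [IsAlgClosed K] [DecidableEq K]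
    {ι : Type*} [Fintype ι] {p : K[X]} {a : ι → K} (ha : Injective a)
    (hroots : p.roots.toFinset = univ.image a) :
    ∑ i, p.rootMultiplicity (a i) = p.natDegree := by
  rw [← IsAlgClosed.card_roots_eq_natDegree, ← Multiset.toFinset_sum_count_eq, hroots,
    sum_image fun i _ j _ h => ha h]
  simp [count_roots]

open scoped Classical in
noncomputable def rootNear {K : Type*} [Field K] [PseudoMetricSpace K] (p : K[X]) (c : K)
    (ε : ℝ) : K :=
  if h : ∃ z ∈ p.roots, dist z c < ε then h.choose else c

variable {K : Type*} [Field K] [PseudoMetricSpace K] {p : K[X]} {m : ℕ} {w : Fin m → K} {ε : ℝ}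

lemma rootNear_spec {c : K} (h : ∃ z ∈ p.roots, dist z c < ε) :
    p.rootNear c ε ∈ p.roots ∧ dist (p.rootNear c ε) c < ε := by
  rw [rootNear, dif_pos h]
  exact h.choose_spec

lemma roots_toFinset_eq_image_rootNear [DecidableEq K]
    (hsep : Pairwise (Disjoint on fun j => ball (w j) ε)) (hcard : p.roots.toFinset.card ≤ m)
    (hnear : ∀ j, ∃ z ∈ p.roots, dist z (w j) < ε) :
    p.roots.toFinset = univ.image (fun j => p.rootNear (w j) ε) ∧
      Injective fun j => p.rootNear (w j) ε :=
  eq_image_of_card_le_of_pairwise_disjoint hsep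
    (fun j => Multiset.mem_toFinset.2 (rootNear_spec (hnear j)).1)
    (fun j => (rootNear_spec (hnear j)).2) (by simpa using hcard)

lemma eq_rootNear_of_dist_lt [DecidableEq K]
    (hsep : Pairwise (Disjoint on fun j => ball (w j) ε)) (hcard : p.roots.toFinset.card ≤ m)
    (hnear : ∀ j, ∃ z ∈ p.roots, dist z (w j) < ε) {z : K} (hz : z ∈ p.roots) {j : Fin m}
    (hzj : dist z (w j) < ε) : z = p.rootNear (w j) ε := by
  obtain ⟨k, -, rfl⟩ := mem_image.1 <|
    (roots_toFinset_eq_image_rootNear hsep hcard hnear).1 ▸ Multiset.mem_toFinset.2 hz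
  rw [hsep.eq (Set.not_disjoint_iff.2 ⟨_, (rootNear_spec (hnear k)).2, hzj⟩)]

end Polynomial

section Family

variable {X : Type*} [TopologicalSpace X]

lemma not_isSplitPtPoly_iff {P : X → ℂ[X]} {ξ : X} :
    ¬ IsSplitPtPoly P ξ ↔
      ∀ᶠ ζ in 𝓝 ξ, (P ζ).roots.toFinset.card ≤ (P ξ).roots.toFinset.card := by
  simp [IsSplitPtPoly, eventually_iff_exists_mem]

lemma continuousAt_eval_of_continuous_coeff {R : Type*} [Semiring R] [TopologicalSpace R]
    [IsTopologicalSemiring R] {P : X → R[X]} {n : ℕ} (hdeg : ∀ ζ, (P ζ).natDegree ≤ n)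
    (hcont : ∀ i, Continuous fun ζ => (P ζ).coeff i) {f : X → R} {x : X}
    (hf : ContinuousAt f x) : ContinuousAt (fun ζ => (P ζ).eval (f ζ)) x := by
  have hsum : (fun ζ => (P ζ).eval (f ζ)) =
      fun ζ => ∑ i ∈ range (n + 1), (P ζ).coeff i * f ζ ^ i :=
    funext fun ζ => eval_eq_sum_range' (Nat.lt_succ_of_le (hdeg ζ)) _
  rw [hsum]
  exact tendsto_finsetSum _ fun i _ => (hcont i).continuousAt.mul (hf.pow i)

lemma continuous_coeff_iterate_derivative {R : Type*} [Semiring R] [TopologicalSpace R]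
    [IsTopologicalSemiring R] {P : X → R[X]} (hcont : ∀ i, Continuous fun ζ => (P ζ).coeff i)
    (k i : ℕ) : Continuous fun ζ => (derivative^[k] (P ζ)).coeff i := by
  simp_rw [coeff_iterate_derivative]
  exact (hcont _).const_smul ((i + k).descFactorial k)

lemma eventually_rootMultiplicity_le {K : Type*} [Field K] [CharZero K] [TopologicalSpace K]
    [IsTopologicalRing K] [T1Space K] {P : X → K[X]} {n : ℕ} (hdeg : ∀ ζ, (P ζ).natDegree ≤ n)
    (hcont : ∀ i, Continuous fun ζ => (P ζ).coeff i) {f : X → K} {x : X}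
    (hf : ContinuousAt f x) (hx : P x ≠ 0) :
    ∀ᶠ ζ in 𝓝 x, (P ζ).rootMultiplicity (f ζ) ≤ (P x).rootMultiplicity (f x) := by
  set k := (P x).rootMultiplicity (f x)
  obtain ⟨l, hlk, hl⟩ : ∃ l ≤ k, ¬ (derivative^[l] (P x)).IsRoot (f x) := by
    simpa using (lt_rootMultiplicity_iff_isRoot_iterate_derivative hx (n := k)).not.1 k.lt_irrefl
  have hderiv : ContinuousAt (fun ζ => (derivative^[l] (P ζ)).eval (f ζ)) x :=
    continuousAt_eval_of_continuous_coeff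
      (fun ζ => (natDegree_iterate_derivative _ _).trans ((Nat.sub_le _ _).trans (hdeg ζ)))
      (continuous_coeff_iterate_derivative hcont l) hf
  filter_upwards [hderiv.eventually_ne hl] with ζ hζ
  by_contra! hlt
  exact hζ (isRoot_iterate_derivative_of_lt_rootMultiplicity (hlk.trans_lt hlt))

variable {K : Type*} [NormedField K] [IsAlgClosed K] {P : X → K[X]} {n : ℕ}

lemma eventually_exists_mem_roots_dist_lt (hmonic : ∀ ζ, (P ζ).Monic)
    (hdeg : ∀ ζ, (P ζ).natDegree = n) (hcont : ∀ i, Continuous fun ζ => (P ζ).coeff i) {x : X}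
    {u : K} (hu : (P x).IsRoot u) {ε : ℝ} (hε : 0 < ε) :
    ∀ᶠ ζ in 𝓝 x, ∃ z ∈ (P ζ).roots, dist z u < ε := by
  have hsmall : ∀ᶠ ζ in 𝓝 x, ‖(P ζ).eval u‖ < ε ^ n :=
    (continuousAt_eval_of_continuous_coeff (fun ζ => (hdeg ζ).le) hcont
      continuousAt_const).norm.eventually_lt_const (by simpa [hu.eq_zero] using pow_pos hε n)
  filter_upwards [hsmall] with ζ hζ
  obtain ⟨z, hz, hzu⟩ := exists_mem_roots_dist_lt_of_norm_eval_lt (hmonic ζ) hε.le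
    (by rwa [hdeg ζ])
  exact ⟨z, hz, by rwa [dist_comm]⟩

lemma eventually_rootMultiplicity_eq [CharZero K] [DecidableEq K]
    (hdeg : ∀ ζ, (P ζ).natDegree = n) (hcont : ∀ i, Continuous fun ζ => (P ζ).coeff i)
    {ι : Type*} [Fintype ι] {lam : ι → X → K} {x : X} (hx : P x ≠ 0)
    (hlam : ∀ j, ContinuousAt (lam j) x)
    (hroots : ∀ᶠ ζ in 𝓝 x,
      (P ζ).roots.toFinset = univ.image (fun j => lam j ζ) ∧ Injective fun j => lam j ζ) :
    ∀ᶠ ζ in 𝓝 x, ∀ j, (P ζ).rootMultiplicity (lam j ζ) = (P x).rootMultiplicity (lam j x) := by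
  have hle : ∀ᶠ ζ in 𝓝 x, ∀ j,
      (P ζ).rootMultiplicity (lam j ζ) ≤ (P x).rootMultiplicity (lam j x) :=
    eventually_all.2 fun j =>
      eventually_rootMultiplicity_le (fun ζ => (hdeg ζ).le) hcont (hlam j) hx
  have hsum : ∀ ζ, (P ζ).roots.toFinset = univ.image (fun j => lam j ζ) ∧
      Injective (fun j => lam j ζ) → ∑ j, (P ζ).rootMultiplicity (lam j ζ) = n :=
    fun ζ h => (sum_rootMultiplicity_eq_natDegree h.2 h.1).trans (hdeg ζ)
  filter_upwards [hle, hroots] with ζ hζle hζroots j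
  refine (sum_eq_sum_iff_of_le fun j _ => hζle j).1 ?_ j (mem_univ j)
  rw [hsum ζ hζroots, hsum x hroots.self_of_nhds]

variable [DecidableEq K] {m : ℕ} {w : Fin m → K}

lemma continuousAt_rootNear (hmonic : ∀ ζ, (P ζ).Monic) (hdeg : ∀ ζ, (P ζ).natDegree = n)
    (hcont : ∀ i, Continuous fun ζ => (P ζ).coeff i) {ε : ℝ}
    (hsep : Pairwise (Disjoint on fun j => ball (w j) ε)) {x : X}
    (hgood : ∀ᶠ ζ in 𝓝 x,
      (P ζ).roots.toFinset.card ≤ m ∧ ∀ j, ∃ z ∈ (P ζ).roots, dist z (w j) < ε)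
    (j : Fin m) : ContinuousAt (fun ζ => (P ζ).rootNear (w j) ε) x := by
  set r := (P x).rootNear (w j) ε
  obtain ⟨hr, hrw⟩ := rootNear_spec (hgood.self_of_nhds.2 j)
  refine Metric.tendsto_nhds.2 fun δ hδ => ?_
  have hδ' : 0 < min δ (ε - dist r (w j)) := lt_min hδ (sub_pos.2 hrw)
  filter_upwards [hgood, eventually_exists_mem_roots_dist_lt hmonic hdeg hcont
    (isRoot_of_mem_roots hr) hδ'] with ζ hζ ⟨z, hz, hzr⟩
  have hzw : dist z (w j) < ε := by
    linarith [dist_triangle z r (w j), min_le_right δ (ε - dist r (w j))]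
  rw [← eq_rootNear_of_dist_lt hsep hζ.1 hζ.2 hz hzw]
  exact hzr.trans_le (min_le_left _ _)

lemma exists_continuousOn_roots_eq_image (hmonic : ∀ ζ, (P ζ).Monic)
    (hdeg : ∀ ζ, (P ζ).natDegree = n) (hcont : ∀ i, Continuous fun ζ => (P ζ).coeff i) {ξ : X}
    (hw : Injective w) (hwroots : ∀ j, (P ξ).IsRoot (w j))
    (hcard : ∀ᶠ ζ in 𝓝 ξ, (P ζ).roots.toFinset.card ≤ m) :
    ∃ U, IsOpen U ∧ ξ ∈ U ∧ ∃ lam : Fin m → X → K,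
      (∀ j, ContinuousOn (lam j) U) ∧ (∀ j, lam j ξ = w j) ∧
      ∀ ζ ∈ U, (P ζ).roots.toFinset = univ.image (fun j => lam j ζ) ∧
        Injective fun j => lam j ζ := by
  obtain ⟨ε, hε, hsep⟩ := exists_pos_pairwise_disjoint_ball hw
  set G := {ζ | (P ζ).roots.toFinset.card ≤ m ∧ ∀ j, ∃ z ∈ (P ζ).roots, dist z (w j) < ε}
  have hG : G ∈ 𝓝 ξ := hcard.and <| eventually_all.2 fun j =>
    eventually_exists_mem_roots_dist_lt hmonic hdeg hcont (hwroots j) hε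
  have hξG : ξ ∈ G := mem_of_mem_nhds hG
  refine ⟨interior G, isOpen_interior, mem_interior_iff_mem_nhds.2 hG,
    fun j ζ => (P ζ).rootNear (w j) ε, fun j ζ hζ => ?_, fun j => ?_, fun ζ hζ => ?_⟩
  · exact (continuousAt_rootNear hmonic hdeg hcont hsep
      (mem_interior_iff_mem_nhds.1 hζ) j).continuousWithinAt
  · exact (eq_rootNear_of_dist_lt hsep hξG.1 hξG.2
      (mem_roots'.2 ⟨(hmonic ξ).ne_zero, hwroots j⟩) (by simpa using hε)).symm
  · exact roots_toFinset_eq_image_rootNear hsep (interior_subset hζ).1 (interior_subset hζ).2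

end Family

theorem stmt0_general {X : Type*} [TopologicalSpace X] (n : ℕ)
    (P : X → Polynomial ℂ)
    (hmonic : ∀ ζ, (P ζ).Monic) (hdeg : ∀ ζ, (P ζ).natDegree = n)
    (hcont : ∀ i : ℕ, Continuous fun ζ => (P ζ).coeff i)
    (ξ : X) (m : ℕ) (w : Fin m → ℂ) (hw : Function.Injective w)
    (hwroots : ∀ z : ℂ, z ∈ (P ξ).roots.toFinset ↔ ∃ j, w j = z) :
    ¬ IsSplitPtPoly P ξ ↔
      ∃ U : Set X, IsOpen U ∧ ξ ∈ U ∧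
        ∃ lam : Fin m → X → ℂ,
          (∀ j, ContinuousOn (lam j) U) ∧
          (∀ j, lam j ξ = w j) ∧
          (∀ ζ ∈ U, ∀ j k : Fin m, j ≠ k → lam j ζ ≠ lam k ζ) ∧
          (∀ ζ ∈ U, ∀ z : ℂ, z ∈ (P ζ).roots.toFinset ↔ ∃ j, lam j ζ = z) ∧
          (∀ ζ ∈ U, ∀ j, Polynomial.rootMultiplicity (lam j ζ) (P ζ) =
            Polynomial.rootMultiplicity (w j) (P ξ)) := by
  rw [not_isSplitPtPoly_iff, card_eq_of_mem_iff_exists_eq hw hwroots]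
  constructor
  · intro hcard
    have hwroot (j : Fin m) : (P ξ).IsRoot (w j) :=
      isRoot_of_mem_roots (Multiset.mem_toFinset.1 ((hwroots _).2 ⟨j, rfl⟩))
    obtain ⟨U, hU, hξU, lam, hlam, hlamξ, hroots⟩ :=
      exists_continuousOn_roots_eq_image hmonic hdeg hcont hw hwroot hcard
    have hUξ : U ∈ 𝓝 ξ := hU.mem_nhds hξU
    obtain ⟨V, hVmult, hV, hξV⟩ := mem_nhds_iff.1 <|
      eventually_rootMultiplicity_eq hdeg hcont (hmonic ξ).ne_zero
        (fun j => (hlam j).continuousAt hUξ) (eventually_of_mem hUξ hroots)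
    refine ⟨U ∩ V, hU.inter hV, ⟨hξU, hξV⟩, lam, fun j => (hlam j).mono Set.inter_subset_left,
      hlamξ, fun ζ hζ j k hjk => (hroots ζ hζ.1).2.ne hjk, fun ζ hζ z => ?_, fun ζ hζ j => ?_⟩
    · simp [(hroots ζ hζ.1).1]
    · simpa [hlamξ] using hVmult hζ.2 j
  · rintro ⟨U, hU, hξU, lam, -, -, hdistinct, hroots, -⟩
    filter_upwards [hU.mem_nhds hξU] with ζ hζ
    exact (card_eq_of_mem_iff_exists_eq
      (fun j k h => by_contra fun hjk => hdistinct ζ hζ j k hjk h) (hroots ζ hζ)).le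

/-- characterization of non-splitting points for a continuous family of monic
polynomials of degree `n`. -/
theorem stmt0 {X : Type*} [TopologicalSpace X] (n : ℕ) (hn : 1 ≤ n)
    (P : X → Polynomial ℂ)
    (hmonic : ∀ ζ, (P ζ).Monic) (hdeg : ∀ ζ, (P ζ).natDegree = n)
    (hcont : ∀ i : ℕ, Continuous fun ζ => (P ζ).coeff i)
    (ξ : X) (m : ℕ) (w : Fin m → ℂ) (hw : Function.Injective w)
    (hwroots : ∀ z : ℂ, z ∈ (P ξ).roots.toFinset ↔ ∃ j, w j = z) :
    ¬ IsSplitPtPoly P ξ ↔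
      ∃ U : Set X, IsOpen U ∧ ξ ∈ U ∧
        ∃ lam : Fin m → X → ℂ,
          (∀ j, ContinuousOn (lam j) U) ∧
          (∀ j, lam j ξ = w j) ∧
          (∀ ζ ∈ U, ∀ j k : Fin m, j ≠ k → lam j ζ ≠ lam k ζ) ∧
          (∀ ζ ∈ U, ∀ z : ℂ, z ∈ (P ζ).roots.toFinset ↔ ∃ j, lam j ζ = z) ∧
          (∀ ζ ∈ U, ∀ j, Polynomial.rootMultiplicity (lam j ζ) (P ζ) =
            Polynomial.rootMultiplicity (w j) (P ξ)) :=
  stmt0_general n P hmonic hdeg hcont ξ m w hw hwroots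
end

section
/- Let n ≥ 1 and let p be a monic complex polynomial of degree n with exactly m distinct zeros. For k ≥ 0 let 𝒫_k denote the complex vector space of polynomials of degree ≤ k (together with the zero polynomial), and let 𝒫_{−1} = {0}. Let Φ : 𝒫_{n−2} × 𝒫_{n−1} → 𝒫_{2n−2} be the linear map Φ(s,q) = p·s − p'·q, where p' is the derivative of p. Then the rank of Φ (the dimension of its range) equals n + m − 1. -/
/-!
Write `p = g * a` with `a = ∏ (X - r)` over the `m` distinct roots and `g = ∏ (X - r) ^ (μ r - 1)`.
In characteristic zero `p'` vanishes to order exactly `μ r - 1` at each root `r`, so `p' = g * b`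
with `b` coprime to `a`. Hence `p s = p' q` iff `a s = b q` iff `(s, q) = (b t, a t)`, and the
degree bounds allow exactly the `t` of degree `< n - m`. So `ker Φ` has dimension `n - m`, and
rank–nullity gives `(2n - 1) - (n - m)`.
-/

open Polynomial Module

theorem IsCoprime.exists_eq_mul_of_mul_eq_mul {R : Type*} [CommRing R] [IsDomain R]
    {a b s q : R} (hab : IsCoprime a b) (ha : a ≠ 0) (h : a * s = b * q) :
    ∃ t, s = b * t ∧ q = a * t := by
  obtain ⟨t, rfl⟩ := hab.dvd_of_dvd_mul_left ⟨s, h.symm⟩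
  refine ⟨t, mul_left_cancel₀ ha ?_, rfl⟩
  rw [h, mul_left_comm]

namespace Polynomial

section degreeLT

variable {R : Type*} [Semiring R] [NoZeroDivisors R]

lemma mul_mem_degreeLT_add_natDegree_iff {a t : R[X]} {k : ℕ} (ha : a ≠ 0) :
    a * t ∈ degreeLT R (a.natDegree + k) ↔ t ∈ degreeLT R k := by
  simp only [mem_degreeLT, degree_mul, degree_eq_natDegree ha, Nat.cast_add]
  exact WithBot.add_lt_add_iff_left WithBot.coe_ne_bot

lemma mul_mem_degreeLT_of_natDegree_add_le {a t : R[X]} {k d : ℕ} (ht : t ∈ degreeLT R k)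
    (hd : a.natDegree + k ≤ d) : a * t ∈ degreeLT R d := by
  rcases eq_or_ne a 0 with rfl | ha
  · simp
  · exact degreeLT_mono hd ((mul_mem_degreeLT_add_natDegree_iff ha).2 ht)

end degreeLT

lemma finrank_degreeLT (K : Type*) [Field K] (n : ℕ) : finrank K (degreeLT K n) = n := by
  simp [finrank_eq_card_basis (degreeLT.basis K n)]

section Kernel

variable {K M : Type*} [Field K] [AddCommGroup M] [Module K M]

noncomputable def mulLeftPair (a b : K[X]) {k d₁ d₂ : ℕ} (hb : b.natDegree + k ≤ d₁)
    (ha : a.natDegree + k ≤ d₂) : degreeLT K k →ₗ[K] degreeLT K d₁ × degreeLT K d₂ :=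
  ((LinearMap.mulLeft K b).restrict fun _ ht => mul_mem_degreeLT_of_natDegree_add_le ht hb).prod
    ((LinearMap.mulLeft K a).restrict fun _ ht => mul_mem_degreeLT_of_natDegree_add_le ht ha)

variable {a b : K[X]} {k d₁ d₂ : ℕ} (hb : b.natDegree + k ≤ d₁) (ha : a.natDegree + k ≤ d₂)

@[simp] lemma coe_mulLeftPair_fst (t : degreeLT K k) :
    ((mulLeftPair a b hb ha t).1 : K[X]) = b * t := rfl

@[simp] lemma coe_mulLeftPair_snd (t : degreeLT K k) :
    ((mulLeftPair a b hb ha t).2 : K[X]) = a * t := rfl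

lemma mulLeftPair_injective (ha₀ : a ≠ 0) : Function.Injective (mulLeftPair a b hb ha) := by
  intro t u htu
  have := congrArg (fun st => (st.2 : K[X])) htu
  simp only [coe_mulLeftPair_snd] at this
  exact Subtype.ext (mul_left_cancel₀ ha₀ this)

lemma ker_eq_range_mulLeftPair (hab : IsCoprime a b) (ha₀ : a ≠ 0) (had : a.natDegree + k = d₂)
    (Φ : degreeLT K d₁ × degreeLT K d₂ →ₗ[K] M)
    (hΦ : ∀ sq, Φ sq = 0 ↔ a * sq.1 = b * sq.2) :
    LinearMap.ker Φ = LinearMap.range (mulLeftPair a b hb had.le) := by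
  ext sq
  rw [LinearMap.mem_ker, hΦ, LinearMap.mem_range]
  constructor
  · intro h
    obtain ⟨t, hs, hq⟩ := hab.exists_eq_mul_of_mul_eq_mul ha₀ h
    have ht : t ∈ degreeLT K k := by
      rw [← mul_mem_degreeLT_add_natDegree_iff ha₀, had, ← hq]
      exact sq.2.2
    exact ⟨⟨t, ht⟩, Prod.ext (Subtype.ext hs.symm) (Subtype.ext hq.symm)⟩
  · rintro ⟨t, rfl⟩
    simp only [coe_mulLeftPair_fst, coe_mulLeftPair_snd]
    ring

lemma finrank_ker_eq_of_isCoprime (hb : b.natDegree + k ≤ d₁) (hab : IsCoprime a b) (ha₀ : a ≠ 0)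
    (had : a.natDegree + k = d₂)
    (Φ : degreeLT K d₁ × degreeLT K d₂ →ₗ[K] M)
    (hΦ : ∀ sq, Φ sq = 0 ↔ a * sq.1 = b * sq.2) :
    finrank K (LinearMap.ker Φ) = k := by
  rw [ker_eq_range_mulLeftPair hb hab ha₀ had Φ hΦ,
    LinearMap.finrank_range_of_inj (mulLeftPair_injective hb had.le ha₀), finrank_degreeLT]

end Kernel

section Roots

variable {K : Type*} [Field K] [DecidableEq K]

-- For split `p` in characteristic zero these are, up to units, `radical p` and `gcd p p'`.
noncomputable def squarefreePart (p : K[X]) : K[X] := ∏ r ∈ p.roots.toFinset, (X - C r)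

noncomputable def repeatedPart (p : K[X]) : K[X] :=
  ∏ r ∈ p.roots.toFinset, (X - C r) ^ (p.rootMultiplicity r - 1)

variable {p : K[X]}

lemma natDegree_squarefreePart : (squarefreePart p).natDegree = p.roots.toFinset.card := by
  rw [squarefreePart, natDegree_prod _ _ fun r _ => X_sub_C_ne_zero r]
  simp

lemma repeatedPart_mul_squarefreePart (hs : p.Splits) (hm : p.Monic) :
    repeatedPart p * squarefreePart p = p := by
  conv_rhs => rw [hs.eq_prod_roots_of_monic hm, Finset.prod_multiset_map_count]
  rw [repeatedPart, squarefreePart, ← Finset.prod_mul_distrib]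
  refine Finset.prod_congr rfl fun r hr => ?_
  have hμ : 0 < p.rootMultiplicity r := by
    rw [Multiset.mem_toFinset, mem_roots hm.ne_zero] at hr
    exact (rootMultiplicity_pos hm.ne_zero).2 hr
  rw [count_roots, ← pow_succ, Nat.sub_add_cancel hμ]

variable [CharZero K]

lemma repeatedPart_dvd_derivative : repeatedPart p ∣ derivative p := by
  refine Finset.prod_dvd_of_coprime
    (fun _ _ _ _ hrs => (pairwise_coprime_X_sub_C Function.injective_id hrs).pow) fun r hr => ?_
  rw [Multiset.mem_toFinset, mem_roots'] at hr
  rw [← derivative_rootMultiplicity_of_root hr.2]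
  exact pow_rootMultiplicity_dvd _ r

lemma isCoprime_squarefreePart_of_derivative_eq {b : K[X]} (hd : derivative p ≠ 0)
    (hb : derivative p = repeatedPart p * b) : IsCoprime (squarefreePart p) b := by
  refine IsCoprime.prod_left fun r hr => ?_
  rw [(irreducible_X_sub_C r).coprime_iff_not_dvd]
  intro hrb
  obtain ⟨hp₀, hroot⟩ := mem_roots'.1 (Multiset.mem_toFinset.1 hr)
  have hμ := (rootMultiplicity_pos hp₀).2 hroot
  have hdvd : (X - C r) ^ p.rootMultiplicity r ∣ derivative p := by
    rw [hb, ← Nat.sub_add_cancel hμ, pow_succ]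
    exact mul_dvd_mul (Finset.dvd_prod_of_mem _ hr) hrb
  have := (le_rootMultiplicity_iff hd).2 hdvd
  rw [derivative_rootMultiplicity_of_root hroot] at this
  omega

end Roots

end Polynomial

/-- for a monic polynomial `p` of degree `n ≥ 1` with exactly `m` distinct zeros,
the linear map `Φ(s,q) = p·s − p'·q` from `𝒫_{n-2} × 𝒫_{n-1}` to `𝒫_{2n-2}` has rank
`n + m − 1`.  Here `𝒫_k` (polynomials of degree `≤ k` together with `0`) is represented by
`Polynomial.degreeLT ℂ (k+1)`. -/
theorem stmt2 (n : ℕ) (hn : 1 ≤ n) (p : Polynomial ℂ) (hp : p.Monic)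
    (hdeg : p.natDegree = n)
    (m : ℕ) (hm : p.roots.toFinset.card = m)
    (Φ : (Polynomial.degreeLT ℂ (n - 1) × Polynomial.degreeLT ℂ n) →ₗ[ℂ]
      Polynomial.degreeLT ℂ (2 * n - 1))
    (hΦ : ∀ sq : Polynomial.degreeLT ℂ (n - 1) × Polynomial.degreeLT ℂ n,
      (Φ sq : Polynomial ℂ) = p * (sq.1 : Polynomial ℂ) -
        Polynomial.derivative p * (sq.2 : Polynomial ℂ)) :
    Module.finrank ℂ (LinearMap.range Φ) = n + m - 1 := by
  have hd : derivative p ≠ 0 := by rw [Ne, derivative_eq_zero]; omega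
  obtain ⟨b, hb⟩ := repeatedPart_dvd_derivative (p := p)
  have hab := isCoprime_squarefreePart_of_derivative_eq hd hb
  have hpga := repeatedPart_mul_squarefreePart (IsAlgClosed.splits p) hp
  have hdega : (squarefreePart p).natDegree = m := hm ▸ natDegree_squarefreePart
  generalize squarefreePart p = a at hab hpga hdega
  generalize repeatedPart p = g at hb hpga
  have hg : g ≠ 0 := left_ne_zero_of_mul (hpga ▸ hp.ne_zero)
  have ha : a ≠ 0 := right_ne_zero_of_mul (hpga ▸ hp.ne_zero)
  have hb₀ : b ≠ 0 := right_ne_zero_of_mul (hb ▸ hd)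
  have hdegp : g.natDegree + m = n := by rw [← hdeg, ← hpga, natDegree_mul hg ha, hdega]
  have hdegd : g.natDegree + b.natDegree = n - 1 := by
    rw [← natDegree_mul hg hb₀, ← hb, natDegree_derivative, hdeg]
  have hker : finrank ℂ (LinearMap.ker Φ) = n - m := by
    refine finrank_ker_eq_of_isCoprime (k := n - m) (by omega) hab ha (by omega) Φ fun sq => ?_
    rw [← Submodule.coe_eq_zero, hΦ, hb, ← hpga, mul_assoc, mul_assoc, ← mul_sub,
      mul_eq_zero, or_iff_right hg, sub_eq_zero]
  have := LinearMap.finrank_range_add_finrank_ker Φ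
  rw [hker, finrank_prod, finrank_degreeLT, finrank_degreeLT] at this
  omega
end

section
/- Let X be a nonempty connected open subset of ℂ^N and let M : X → Mat(n×m,ℂ) be holomorphic. Set r_max = max_{ζ∈X} rank M(ζ). Then a point ξ ∈ X is a jump point of rank M if and only if rank M(ξ) < r_max; equivalently, the set of jump points of rank M is the common zero set of all minors of M of order r_max. -/
/-!
The order-`r` minors of `M` are holomorphic on `X`, and some minor `D` is nonzero at a point of
maximal rank. If `ξ` were not a jump point although `rank M ξ < r`, then `rank M ≤ rank M ξ < r`
on a neighbourhood of `ξ`, so `D` would vanish there, hence on all of the connected set `X` by the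
identity theorem, a contradiction. The identity theorem in several variables is reduced to the
one-variable one by restricting to complex lines.
-/

/-- `ξ` is a jump point of `rank M` (relative to `S`) : every neighborhood of `ξ` in `S`
contains a point `ζ` with `rank M ζ > rank M ξ`. -/
def IsRankJumpPt {E : Type*} [TopologicalSpace E] {n m : ℕ} (S : Set E)
    (M : E → Matrix (Fin n) (Fin m) ℂ) (ξ : E) : Prop :=
  ∀ U ∈ nhdsWithin ξ S, ∃ ζ ∈ U, (M ξ).rank < (M ζ).rank

open Set Filter Topology

theorem exists_linearIndependent_comp_of_le_finrank_span {K ι V : Type*} [DivisionRing K]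
    [Finite ι] [AddCommGroup V] [Module K V] (v : ι → V) {r : ℕ}
    (hr : r ≤ Module.finrank K (Submodule.span K (range v))) :
    ∃ g : Fin r → ι, LinearIndependent K (v ∘ g) := by
  obtain ⟨κ, a, ha, hspan, hli⟩ := exists_linearIndependent' K v
  have : Finite κ := .of_injective a ha
  have := Fintype.ofFinite κ
  rw [← hspan, finrank_span_eq_card hli] at hr
  obtain ⟨e⟩ := Function.Embedding.nonempty_of_card_le (α := Fin r) (β := κ) (by simpa using hr)
  exact ⟨a ∘ e, hli.comp e e.injective⟩

namespace Matrix

variable {m n K : Type*} [Fintype n] [Field K] {r : ℕ}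

theorem le_rank_of_submatrix_det_ne_zero {A : Matrix m n K} {f : Fin r → m} {g : Fin r → n}
    (h : (A.submatrix f g).det ≠ 0) : r ≤ A.rank := by
  simpa [rank_of_det_ne_zero h] using rank_submatrix_le A f g

variable [Fintype m]

theorem exists_submatrix_det_ne_zero_of_le_rank {A : Matrix m n K} (hr : r ≤ A.rank) :
    ∃ (f : Fin r → m) (g : Fin r → n), (A.submatrix f g).det ≠ 0 := by
  rw [rank_eq_finrank_span_cols] at hr
  obtain ⟨g, hg⟩ := exists_linearIndependent_comp_of_le_finrank_span A.col hr
  have hrank : (A.submatrix id g).rank = r := by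
    rw [rank_eq_finrank_span_cols]
    exact (finrank_span_eq_card hg).trans (Fintype.card_fin r)
  rw [rank_eq_finrank_span_row] at hrank
  obtain ⟨f, hf⟩ := exists_linearIndependent_comp_of_le_finrank_span _ hrank.ge
  have hunit : IsUnit (A.submatrix f g) := linearIndependent_rows_iff_isUnit.mp hf
  exact ⟨f, g, ((isUnit_iff_isUnit_det _).mp hunit).ne_zero⟩

theorem le_rank_iff_exists_submatrix_det_ne_zero {A : Matrix m n K} :
    r ≤ A.rank ↔ ∃ (f : Fin r → m) (g : Fin r → n), (A.submatrix f g).det ≠ 0 :=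
  ⟨exists_submatrix_det_ne_zero_of_le_rank,
    fun ⟨_, _, h⟩ => le_rank_of_submatrix_det_ne_zero h⟩

theorem rank_lt_iff_forall_submatrix_det_eq_zero {A : Matrix m n K} :
    A.rank < r ↔ ∀ (f : Fin r → m) (g : Fin r → n), (A.submatrix f g).det = 0 := by
  simpa using le_rank_iff_exists_submatrix_det_ne_zero.not

end Matrix

theorem Matrix.differentiableOn_det {𝕜 E n : Type*} [NontriviallyNormedField 𝕜]
    [NormedAddCommGroup E] [NormedSpace 𝕜 E] [Fintype n] [DecidableEq n]
    {M : E → Matrix n n 𝕜} {s : Set E} (hM : ∀ i j, DifferentiableOn 𝕜 (fun x => M x i j) s) :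
    DifferentiableOn 𝕜 (fun x => (M x).det) s := by
  simp only [Matrix.det_apply]
  refine DifferentiableOn.fun_sum fun σ _ => DifferentiableOn.const_smul ?_ _
  have := Finset.prod_induction (s := Finset.univ) (fun i x => M x (σ i) i)
    (DifferentiableOn 𝕜 · s) (fun _ _ => DifferentiableOn.mul) (differentiableOn_const 1)
    fun i _ => hM (σ i) i
  simpa only [Finset.prod_fn] using this

section IdentityTheorem

variable {E F : Type*} [NormedAddCommGroup E] [NormedSpace ℂ E] [NormedAddCommGroup F]
  [NormedSpace ℂ F] [CompleteSpace F]

theorem DifferentiableOn.eqOn_zero_of_convex_of_eventuallyEq_zero {f : E → F} {C : Set E}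
    (hf : DifferentiableOn ℂ f C) (hCo : IsOpen C) (hCc : Convex ℝ C) {y : E} (hy : y ∈ C)
    (hfy : f =ᶠ[𝓝 y] 0) : EqOn f 0 C := by
  intro z hz
  let L : ℂ →ᵃ[ℂ] E := AffineMap.lineMap y z
  have hTo : IsOpen (L ⁻¹' C) := hCo.preimage L.differentiable.continuous
  have hTc : Convex ℝ (L ⁻¹' C) := by
    intro a ha b hb s t hs ht hst
    rw [mem_preimage]
    convert hCc ha hb hs ht hst using 1
    simp only [L, AffineMap.lineMap_apply_module', Complex.real_smul, ← Complex.coe_algebraMap]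
    linear_combination (norm := module) (-hst) • y
  have hg : AnalyticOnNhd ℂ (f ∘ L) (L ⁻¹' C) :=
    (hf.comp L.differentiableOn (mapsTo_preimage L C)).analyticOnNhd hTo
  have hg0 : f ∘ L =ᶠ[𝓝 0] 0 := by
    have hL0 : L 0 = y := AffineMap.lineMap_apply_zero y z
    exact (L.differentiable.continuous.tendsto' 0 y hL0).eventually hfy
  have h0 : (0 : ℂ) ∈ L ⁻¹' C := by simpa [L] using hy
  have h1 : (1 : ℂ) ∈ L ⁻¹' C := by simpa [L] using hz
  simpa [L] using hg.eqOn_zero_of_preconnected_of_eventuallyEq_zero hTc.isPreconnected h0 hg0 h1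

theorem DifferentiableOn.eqOn_zero_of_preconnected_of_eventuallyEq_zero {f : E → F} {U : Set E}
    (hf : DifferentiableOn ℂ f U) (hUo : IsOpen U) (hU : IsPreconnected U) {z₀ : E}
    (h₀ : z₀ ∈ U) (hfz₀ : f =ᶠ[𝓝 z₀] 0) : EqOn f 0 U := by
  have hsub : U ⊆ {x | f =ᶠ[𝓝 x] 0} := by
    refine hU.subset_of_closure_inter_subset isOpen_setOfPred_eventually_nhds ⟨z₀, h₀, hfz₀⟩ ?_
    rintro x ⟨hxu, hxU⟩
    obtain ⟨ρ, hρ, hball⟩ := Metric.isOpen_iff.mp hUo x hxU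
    obtain ⟨y, hyu, hxy⟩ := Metric.mem_closure_iff.mp hxu ρ hρ
    have hB : EqOn f 0 (Metric.ball x ρ) :=
      (hf.mono hball).eqOn_zero_of_convex_of_eventuallyEq_zero Metric.isOpen_ball
        (convex_ball x ρ) (by rwa [Metric.mem_ball, dist_comm]) hyu
    exact eventuallyEq_of_mem (Metric.ball_mem_nhds x hρ) hB
  exact fun z hz => (hsub hz).eq_of_nhds

end IdentityTheorem

theorem Matrix.rank_le_on_of_eventually_rank_le {E m n : Type*} [NormedAddCommGroup E]
    [NormedSpace ℂ E] [Fintype m] [Fintype n] {M : E → Matrix m n ℂ} {U : Set E}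
    (hM : ∀ i j, DifferentiableOn ℂ (fun x => M x i j) U) (hUo : IsOpen U)
    (hU : IsPreconnected U) {x₀ : E} (h₀ : x₀ ∈ U) {k : ℕ}
    (hk : ∀ᶠ x in 𝓝 x₀, (M x).rank ≤ k) : ∀ x ∈ U, (M x).rank ≤ k := by
  intro x hx
  by_contra! hlt
  obtain ⟨f, g, hfg⟩ := exists_submatrix_det_ne_zero_of_le_rank (Nat.succ_le_of_lt hlt)
  have hD := (Matrix.differentiableOn_det fun i j => hM (f i) (g j))
    |>.eqOn_zero_of_preconnected_of_eventuallyEq_zero hUo hU h₀ <| hk.mono fun x' hx' =>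
      rank_lt_iff_forall_submatrix_det_eq_zero.mp (Nat.lt_succ_of_le hx') f g
  exact hfg (hD hx)

theorem stmt3_general {N n m : ℕ} (X : Set (Fin N → ℂ)) (hXo : IsOpen X)
    (hXc : IsConnected X)
    (M : (Fin N → ℂ) → Matrix (Fin n) (Fin m) ℂ)
    (hholo : ∀ i j, DifferentiableOn ℂ (fun ζ => M ζ i j) X)
    (r : ℕ) (hub : ∀ ζ ∈ X, (M ζ).rank ≤ r) (hmax : ∃ ζ ∈ X, (M ζ).rank = r) :
    ∀ ξ ∈ X,
      (IsRankJumpPt X M ξ ↔ (M ξ).rank < r) ∧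
      (IsRankJumpPt X M ξ ↔
        ∀ (f : Fin r → Fin n) (g : Fin r → Fin m), ((M ξ).submatrix f g).det = 0) := by
  intro ξ hξ
  obtain ⟨ζ₀, hζ₀, hrank₀⟩ := hmax
  have hjump : IsRankJumpPt X M ξ ↔ (M ξ).rank < r := by
    refine ⟨fun h => ?_, fun hlt U hU => ?_⟩
    · obtain ⟨ζ, hζ, hξζ⟩ := h X self_mem_nhdsWithin
      exact hξζ.trans_le (hub ζ hζ)
    · by_contra! hU'
      rw [hXo.nhdsWithin_eq hξ] at hU
      have hle := Matrix.rank_le_on_of_eventually_rank_le hholo hXo hXc.isPreconnected hξ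
        (eventually_of_mem hU hU') ζ₀ hζ₀
      omega
  exact ⟨hjump, hjump.trans Matrix.rank_lt_iff_forall_submatrix_det_eq_zero⟩

/-- for a holomorphic matrix function `M` on a nonempty connected open
`X ⊆ ℂ^N` with maximal rank `r`, a point `ξ ∈ X` is a jump point of `rank M` iff
`rank M ξ < r`, iff all minors of order `r` of `M` vanish at `ξ`. -/
theorem stmt3 {N n m : ℕ} (X : Set (Fin N → ℂ)) (hXo : IsOpen X) (hXne : X.Nonempty)
    (hXc : IsConnected X)
    (M : (Fin N → ℂ) → Matrix (Fin n) (Fin m) ℂ)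
    (hholo : ∀ i j, DifferentiableOn ℂ (fun ζ => M ζ i j) X)
    (r : ℕ) (hub : ∀ ζ ∈ X, (M ζ).rank ≤ r) (hmax : ∃ ζ ∈ X, (M ζ).rank = r) :
    ∀ ξ ∈ X,
      (IsRankJumpPt X M ξ ↔ (M ξ).rank < r) ∧
      (IsRankJumpPt X M ξ ↔
        ∀ (f : Fin r → Fin n) (g : Fin r → Fin m), ((M ξ).submatrix f g).det = 0) :=
  stmt3_general X hXo hXc M hholo r hub hmax
end
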